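/- There exists a constant C > 0, depending only on d, such that for every T ∈ (0, 1/2], the Kullback–Leibler divergence of q_T from the standard Gaussian satisfies ∫_{ℝ^d} q_T(y) · log( q_T(y)/φ_d(y) ) dy ≤ C · T². -/

import Mathlib

open MeasureTheory Real Set

noncomputable section

/-- Standard Gaussian density on `ℝ^d`. -/
def stdGauss (d : ℕ) (z : EuclideanSpace ℝ (Fin d)) : ℝ :=
  (2 * π) ^ (-(d : ℝ) / 2) * Real.exp (-‖z‖ ^ 2 / 2)

/-- Marginal density `q_T` at time `1 - T` of the variance preserving forward
diffusion started from `p₀`. -/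
def fwdDensity (d : ℕ) (p0 : EuclideanSpace ℝ (Fin d) → ℝ) (T : ℝ)
    (y : EuclideanSpace ℝ (Fin d)) : ℝ :=
  ∫ u : EuclideanSpace ℝ (Fin d),
    p0 u * ((2 * π * (1 - T ^ 2)) ^ (-(d : ℝ) / 2) *
      Real.exp (-‖y - T • u‖ ^ 2 / (2 * (1 - T ^ 2))))

/-!
The Kullback–Leibler divergence is dominated by the `χ²`-divergence, since
`q log (q / φ) ≤ q² / φ - q` pointwise. The density `q_T` is the mixture over `u ~ p₀` of the
Gaussians `g_u = N(T u, (1 - T²) I)`, so by Tonelli `∫ q_T² / φ` is the average over independent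
`u, v ~ p₀` of `∫ g_u g_v / φ`. Completing the square shows that `g_u g_v / φ` is a multiple of a
Gaussian density, whence `∫ g_u g_v / φ ≤ (1 - T⁴)^(-d/2) exp (T² ⟪u, v⟫ / (1 - T²))`. For `u, v`
in the cube `[-1, 1]^d` we have `⟪u, v⟫ ≤ d`, so for `T ≤ 1/2` this is at most `exp (2 d T²)`,
and `exp (2 d T²) - 1 = O(T²)`.
-/

open scoped ENNReal RealInnerProductSpace

theorem exp_sub_one_le_mul_exp (x : ℝ) : exp x - 1 ≤ x * exp x := by
  have h := mul_le_mul_of_nonneg_left (one_sub_le_exp_neg x) (exp_pos x).le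
  rw [← exp_add, add_neg_cancel, exp_zero] at h
  linarith

theorem one_sub_sq_rpow_mul_exp_le {n t : ℝ} (hn : 0 ≤ n) (ht : 0 ≤ t) (ht4 : t ≤ 1 / 4) :
    (1 - t ^ 2) ^ (-n / 2) * exp (n * t / (1 - t)) ≤ exp (2 * n * t) := by
  have hx : 0 < 1 - t ^ 2 := by nlinarith
  have hlog : -(t ^ 2 / (1 - t ^ 2)) ≤ log (1 - t ^ 2) := by
    convert one_sub_inv_le_log_of_pos hx using 1; field_simp; ring
  have h1 : t ^ 2 / (1 - t ^ 2) ≤ 4 * t / 15 := by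
    rw [div_le_iff₀ hx]; nlinarith
  have h2 : t / (1 - t) ≤ 4 * t / 3 := by
    rw [div_le_iff₀ (by linarith)]; nlinarith
  rw [rpow_def_of_pos hx, ← exp_add, exp_le_exp, mul_div_assoc]
  nlinarith [mul_le_mul_of_nonneg_left h1 hn, mul_le_mul_of_nonneg_left h2 hn,
    mul_le_mul_of_nonneg_left hlog hn]

section KullbackLeibler

variable {α : Type*} [MeasurableSpace α] {μ : Measure α}

theorem mul_log_div_le {x y : ℝ} (hx : 0 ≤ x) (hy : 0 < y) :
    x * log (x / y) ≤ x ^ 2 / y - x := by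
  rcases hx.eq_or_lt with rfl | hx
  · simp
  calc x * log (x / y) ≤ x * (x / y - 1) :=
        mul_le_mul_of_nonneg_left (log_le_sub_one_of_pos (by positivity)) hx.le
    _ = x ^ 2 / y - x := by field_simp

theorem sub_le_mul_log_div {x y : ℝ} (hx : 0 ≤ x) (hy : 0 < y) :
    x - y ≤ x * log (x / y) := by
  rcases hx.eq_or_lt with rfl | hx
  · simpa using hy.le
  calc x - y = x * (1 - (x / y)⁻¹) := by field_simp
    _ ≤ x * log (x / y) :=
        mul_le_mul_of_nonneg_left (one_sub_inv_le_log_of_pos (by positivity)) hx.le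

theorem integral_mul_log_div_le {q φ : α → ℝ} (hq : Integrable q μ) (hφ : Integrable φ μ)
    (hqφ : Integrable (fun x ↦ q x ^ 2 / φ x) μ) (hq0 : ∀ x, 0 ≤ q x) (hφ0 : ∀ x, 0 < φ x) :
    ∫ x, q x * log (q x / φ x) ∂μ ≤ (∫ x, q x ^ 2 / φ x ∂μ) - ∫ x, q x ∂μ := by
  have hmeas : AEStronglyMeasurable (fun x ↦ q x * log (q x / φ x)) μ :=
    (hq.aemeasurable.mul (hq.aemeasurable.div hφ.aemeasurable).log).aestronglyMeasurable
  have hint : Integrable (fun x ↦ q x * log (q x / φ x)) μ :=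
    integrable_of_le_of_le hmeas (.of_forall fun x ↦ sub_le_mul_log_div (hq0 x) (hφ0 x))
      (.of_forall fun x ↦ mul_log_div_le (hq0 x) (hφ0 x)) (hq.sub hφ) (hqφ.sub hq)
  rw [← integral_sub hqφ hq]
  exact integral_mono hint (hqφ.sub hq) fun x ↦ mul_log_div_le (hq0 x) (hφ0 x)

end KullbackLeibler

section Mixture

variable {α β : Type*} [MeasurableSpace α] [MeasurableSpace β] {μ : Measure α} {ν : Measure β}
  [SFinite μ] [SFinite ν]

theorem lintegral_sq_lintegral_mul_le {p : α → ℝ≥0∞} {k : β → α → ℝ≥0∞} {w : β → ℝ≥0∞}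
    {A : ℝ≥0∞} (hp : Measurable p) (hk : Measurable (Function.uncurry k)) (hw : Measurable w)
    (hp1 : ∫⁻ u, p u ∂μ = 1)
    (hA : ∀ u v, p u ≠ 0 → p v ≠ 0 → ∫⁻ y, k y u * k y v * w y ∂ν ≤ A) :
    ∫⁻ y, (∫⁻ u, p u * k y u ∂μ) ^ 2 * w y ∂ν ≤ A := by
  have hF : Measurable fun x : β × α × α ↦
      p x.2.1 * p x.2.2 * (k x.1 x.2.1 * k x.1 x.2.2 * w x.1) := by
    have : Measurable fun x : β × α × α ↦ k x.1 x.2.1 :=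
      hk.comp (measurable_fst.prodMk (measurable_fst.comp measurable_snd))
    have : Measurable fun x : β × α × α ↦ k x.1 x.2.2 :=
      hk.comp (measurable_fst.prodMk (measurable_snd.comp measurable_snd))
    fun_prop
  calc ∫⁻ y, (∫⁻ u, p u * k y u ∂μ) ^ 2 * w y ∂ν
      = ∫⁻ y, ∫⁻ z, p z.1 * p z.2 * (k y z.1 * k y z.2 * w y) ∂μ.prod μ ∂ν := by
        refine lintegral_congr fun y ↦ ?_
        have hy : Measurable fun u ↦ p u * k y u := hp.mul hk.of_uncurry_left
        rw [sq, ← lintegral_prod_mul hy.aemeasurable hy.aemeasurable,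
          ← lintegral_mul_const'' _ (by fun_prop)]
        exact lintegral_congr fun z ↦ by ring
    _ = ∫⁻ z, p z.1 * p z.2 * ∫⁻ y, k y z.1 * k y z.2 * w y ∂ν ∂μ.prod μ := by
        rw [lintegral_lintegral_swap hF.aemeasurable]
        exact lintegral_congr fun z ↦ lintegral_const_mul _
          ((hk.of_uncurry_right.mul hk.of_uncurry_right).mul hw)
    _ ≤ ∫⁻ z, p z.1 * p z.2 * A ∂μ.prod μ := by
        refine lintegral_mono fun z ↦ ?_
        by_cases h1 : p z.1 = 0
        · simp [h1]
        by_cases h2 : p z.2 = 0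
        · simp [h2]
        gcongr
        exact hA _ _ h1 h2
    _ = A := by
        rw [lintegral_mul_const _ (by fun_prop), lintegral_prod_mul hp.aemeasurable hp.aemeasurable,
          hp1, one_mul, one_mul]

end Mixture

section InnerProductSpace

variable {V : Type*} [NormedAddCommGroup V] [InnerProductSpace ℝ V]

theorem norm_add_sq_div_sub_le_two_mul_inner {c : ℝ} (hc : 1 ≤ c) (a b : V) :
    ‖a + b‖ ^ 2 / c - ‖a‖ ^ 2 - ‖b‖ ^ 2 ≤ 2 * ⟪a, b⟫ := by
  linarith [div_le_self (sq_nonneg ‖a + b‖) hc, norm_add_sq_real a b]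

variable [FiniteDimensional ℝ V] [MeasurableSpace V] [BorelSpace V]

theorem integral_exp_neg_mul_norm_sub_sq {b : ℝ} (hb : 0 < b) (m : V) :
    ∫ y : V, exp (-b * ‖y - m‖ ^ 2) = (π / b) ^ (Module.finrank ℝ V / 2 : ℝ) := by
  rw [integral_sub_right_eq_self (fun y : V ↦ exp (-b * ‖y‖ ^ 2)) m,
    GaussianFourier.integral_rexp_neg_mul_sq_norm hb]

end InnerProductSpace

variable {d : ℕ}

local notation "E" => EuclideanSpace ℝ (Fin d)

/-- Density of `N(m, s • I_d)`: `s` is the variance, not the standard deviation. -/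
def gaussDensity (d : ℕ) (s : ℝ) (m y : EuclideanSpace ℝ (Fin d)) : ℝ :=
  (2 * π * s) ^ (-(d : ℝ) / 2) * exp (-‖y - m‖ ^ 2 / (2 * s))

namespace gaussDensity

variable {s : ℝ}

theorem pos (hs : 0 < s) (m y : E) : 0 < gaussDensity d s m y := by
  unfold gaussDensity; positivity

theorem le_const (hs : 0 < s) (m y : E) :
    gaussDensity d s m y ≤ (2 * π * s) ^ (-(d : ℝ) / 2) := by
  refine mul_le_of_le_one_right (by positivity) (exp_le_one_iff.mpr ?_)
  exact div_nonpos_of_nonpos_of_nonneg (by simp) (by positivity)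

theorem continuous_comp {X : Type*} [TopologicalSpace X] {m y : X → E} (hm : Continuous m)
    (hy : Continuous y) : Continuous fun x ↦ gaussDensity d s (m x) (y x) := by
  unfold gaussDensity; fun_prop

theorem eq_const_mul_exp (m y : E) :
    gaussDensity d s m y = (2 * π * s) ^ (-(d : ℝ) / 2) * exp (-(2 * s)⁻¹ * ‖y - m‖ ^ 2) := by
  rw [gaussDensity]; congr 2; ring

theorem integral_eq_one (hs : 0 < s) (m : E) : ∫ y, gaussDensity d s m y = 1 := by
  simp_rw [eq_const_mul_exp, integral_const_mul]
  rw [integral_exp_neg_mul_norm_sub_sq (by positivity), finrank_euclideanSpace_fin,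
    show π / (2 * s)⁻¹ = 2 * π * s by field_simp, ← rpow_add (by positivity), neg_div,
    neg_add_cancel, rpow_zero]

theorem integrable (hs : 0 < s) (m : E) : Integrable (gaussDensity d s m) :=
  .of_integral_ne_zero (by rw [integral_eq_one hs]; exact one_ne_zero)

end gaussDensity

theorem stdGauss_eq_gaussDensity : stdGauss d = gaussDensity d 1 0 := by
  ext y; simp [stdGauss, gaussDensity]

theorem stdGauss_pos (y : E) : 0 < stdGauss d y := by
  rw [stdGauss_eq_gaussDensity]; exact gaussDensity.pos one_pos 0 y

theorem continuous_stdGauss : Continuous (stdGauss d) := by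
  rw [stdGauss_eq_gaussDensity]; exact gaussDensity.continuous_comp continuous_const continuous_id

theorem integrable_stdGauss : Integrable (stdGauss d) := by
  rw [stdGauss_eq_gaussDensity]; exact gaussDensity.integrable one_pos 0

theorem gaussDensity_mul_gaussDensity_div_stdGauss {s : ℝ} (hs : 0 < s) (hs2 : s < 2)
    (a b y : E) :
    gaussDensity d s a y * gaussDensity d s b y / stdGauss d y =
      (s * (2 - s)) ^ (-(d : ℝ) / 2) *
        exp ((‖a + b‖ ^ 2 / (2 - s) - ‖a‖ ^ 2 - ‖b‖ ^ 2) / (2 * s)) *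
        gaussDensity d (s / (2 - s)) ((2 - s)⁻¹ • (a + b)) y := by
  have hs2' : 0 < 2 - s := by linarith
  have hconst : (2 * π * s) ^ (-(d : ℝ) / 2) * (2 * π * s) ^ (-(d : ℝ) / 2) /
      (2 * π * 1) ^ (-(d : ℝ) / 2) =
      (s * (2 - s)) ^ (-(d : ℝ) / 2) * (2 * π * (s / (2 - s))) ^ (-(d : ℝ) / 2) := by
    rw [← mul_rpow (by positivity) (by positivity), ← div_rpow (by positivity) (by positivity),
      ← mul_rpow (by positivity) (by positivity)]
    congr 1
    field_simp
  have hexp : -‖y - a‖ ^ 2 / (2 * s) + -‖y - b‖ ^ 2 / (2 * s) - -‖y - 0‖ ^ 2 / (2 * 1) =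
      (‖a + b‖ ^ 2 / (2 - s) - ‖a‖ ^ 2 - ‖b‖ ^ 2) / (2 * s) +
        -‖y - (2 - s)⁻¹ • (a + b)‖ ^ 2 / (2 * (s / (2 - s))) := by
    rw [sub_zero, norm_sub_sq_real y a, norm_sub_sq_real y b,
      norm_sub_sq_real y ((2 - s)⁻¹ • (a + b)), norm_smul, mul_pow, inner_smul_right,
      inner_add_right, norm_add_sq_real, norm_inv, Real.norm_eq_abs, abs_of_pos hs2']
    field_simp
    ring
  rw [stdGauss_eq_gaussDensity]
  simp only [gaussDensity]
  calc _ = (2 * π * s) ^ (-(d : ℝ) / 2) * (2 * π * s) ^ (-(d : ℝ) / 2) /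
        (2 * π * 1) ^ (-(d : ℝ) / 2) *
        exp (-‖y - a‖ ^ 2 / (2 * s) + -‖y - b‖ ^ 2 / (2 * s) - -‖y - 0‖ ^ 2 / (2 * 1)) := by
        rw [exp_sub, exp_add]; field_simp
    _ = _ := by rw [hconst, hexp, exp_add]; ring

theorem integral_gaussDensity_mul_gaussDensity_div_stdGauss {s : ℝ} (hs : 0 < s) (hs2 : s < 2)
    (a b : E) :
    Integrable (fun y ↦ gaussDensity d s a y * gaussDensity d s b y / stdGauss d y) ∧
      ∫ y, gaussDensity d s a y * gaussDensity d s b y / stdGauss d y =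
        (s * (2 - s)) ^ (-(d : ℝ) / 2) *
          exp ((‖a + b‖ ^ 2 / (2 - s) - ‖a‖ ^ 2 - ‖b‖ ^ 2) / (2 * s)) := by
  have hs' : 0 < s / (2 - s) := div_pos hs (by linarith)
  simp_rw [gaussDensity_mul_gaussDensity_div_stdGauss hs hs2]
  exact ⟨(gaussDensity.integrable hs' _).const_mul _,
    by rw [integral_const_mul, gaussDensity.integral_eq_one hs', mul_one]⟩

theorem EuclideanSpace.inner_le_of_abs_le_one {u v : E} (hu : ∀ i, |u i| ≤ 1)
    (hv : ∀ i, |v i| ≤ 1) : ⟪u, v⟫ ≤ d := by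
  rw [PiLp.inner_apply]
  calc ∑ i, ⟪u i, v i⟫ ≤ ∑ _i : Fin d, (1 : ℝ) := by
        refine Finset.sum_le_sum fun i _ ↦ ?_
        rw [Real.inner_apply]
        exact (le_abs_self _).trans
          ((abs_mul _ _).trans_le (mul_le_one₀ (hu i) (abs_nonneg _) (hv i)))
    _ = d := by simp

theorem integral_gaussDensity_smul_mul_div_stdGauss_le {T : ℝ} (hT : T ^ 2 ≤ 1 / 4) {u v : E}
    (huv : ⟪u, v⟫ ≤ d) :
    ∫ y, gaussDensity d (1 - T ^ 2) (T • u) y * gaussDensity d (1 - T ^ 2) (T • v) y /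
      stdGauss d y ≤ exp (2 * d * T ^ 2) := by
  have hs : 0 < 1 - T ^ 2 := by linarith
  have hexp : (‖T • u + T • v‖ ^ 2 / (2 - (1 - T ^ 2)) - ‖T • u‖ ^ 2 - ‖T • v‖ ^ 2) /
      (2 * (1 - T ^ 2)) ≤ d * T ^ 2 / (1 - T ^ 2) := by
    have h := norm_add_sq_div_sub_le_two_mul_inner (c := 2 - (1 - T ^ 2)) (by nlinarith)
      (T • u) (T • v)
    rw [real_inner_smul_left, real_inner_smul_right] at h
    have hX := h.trans (by nlinarith [mul_le_mul_of_nonneg_left huv (sq_nonneg T)] :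
      2 * (T * (T * ⟪u, v⟫)) ≤ 2 * (d * T ^ 2))
    calc _ ≤ 2 * (d * T ^ 2) / (2 * (1 - T ^ 2)) := by gcongr
      _ = d * T ^ 2 / (1 - T ^ 2) := by field_simp
  rw [(integral_gaussDensity_mul_gaussDensity_div_stdGauss hs (by nlinarith) _ _).2,
    show (1 - T ^ 2) * (2 - (1 - T ^ 2)) = 1 - (T ^ 2) ^ 2 by ring]
  calc _ ≤ (1 - (T ^ 2) ^ 2) ^ (-(d : ℝ) / 2) * exp (d * T ^ 2 / (1 - T ^ 2)) :=
        mul_le_mul_of_nonneg_left (exp_le_exp.mpr hexp) (rpow_nonneg (by nlinarith) _)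
    _ ≤ exp (2 * d * T ^ 2) :=
      one_sub_sq_rpow_mul_exp_le d.cast_nonneg (sq_nonneg T) hT

theorem lintegral_gaussDensity_smul_mul_div_stdGauss_le {T : ℝ} (hT : T ^ 2 ≤ 1 / 4) {u v : E}
    (huv : ⟪u, v⟫ ≤ d) :
    ∫⁻ y, ENNReal.ofReal (gaussDensity d (1 - T ^ 2) (T • u) y) *
      ENNReal.ofReal (gaussDensity d (1 - T ^ 2) (T • v) y) * (ENNReal.ofReal (stdGauss d y))⁻¹ ≤
      ENNReal.ofReal (exp (2 * d * T ^ 2)) := by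
  have hs : 0 < 1 - T ^ 2 := by linarith
  obtain ⟨hJ, -⟩ :=
    integral_gaussDensity_mul_gaussDensity_div_stdGauss hs (by nlinarith) (T • u) (T • v)
  calc _ = ∫⁻ y, ENNReal.ofReal (gaussDensity d (1 - T ^ 2) (T • u) y *
        gaussDensity d (1 - T ^ 2) (T • v) y / stdGauss d y) := by
        refine lintegral_congr fun y ↦ ?_
        rw [ENNReal.ofReal_div_of_pos (stdGauss_pos _),
          ENNReal.ofReal_mul (gaussDensity.pos hs _ _).le, div_eq_mul_inv]
    _ = _ := (ofReal_integral_eq_lintegral_ofReal hJ (.of_forall fun y ↦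
        div_nonneg (mul_nonneg (gaussDensity.pos hs _ _).le (gaussDensity.pos hs _ _).le)
          (stdGauss_pos y).le)).symm
    _ ≤ _ := ENNReal.ofReal_le_ofReal (integral_gaussDensity_smul_mul_div_stdGauss_le hT huv)

theorem continuous_gaussDensity_smul (T : ℝ) :
    Continuous fun x : E × E ↦ gaussDensity d (1 - T ^ 2) (T • x.2) x.1 :=
  gaussDensity.continuous_comp (continuous_snd.const_smul T) continuous_fst

section ForwardDensity

variable {p0 : EuclideanSpace ℝ (Fin d) → ℝ} {T : ℝ}

theorem fwdDensity_eq_integral_gaussDensity :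
    fwdDensity d p0 T = fun y ↦ ∫ u, p0 u * gaussDensity d (1 - T ^ 2) (T • u) y :=
  rfl

theorem stronglyMeasurable_fwdDensity (hp0 : Measurable p0) :
    StronglyMeasurable (fwdDensity d p0 T) := by
  rw [fwdDensity_eq_integral_gaussDensity]
  exact ((hp0.comp measurable_snd).mul
    (continuous_gaussDensity_smul T).measurable).stronglyMeasurable.integral_prod_right'

theorem ofReal_fwdDensity (hp0 : Integrable p0) (hp0_nonneg : ∀ u, 0 ≤ p0 u) (hT : T ^ 2 < 1)
    (y : E) :
    ENNReal.ofReal (fwdDensity d p0 T y) =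
      ∫⁻ u, ENNReal.ofReal (p0 u) * ENNReal.ofReal (gaussDensity d (1 - T ^ 2) (T • u) y) := by
  have hs : 0 < 1 - T ^ 2 := by linarith
  have hint : Integrable fun u ↦ p0 u * gaussDensity d (1 - T ^ 2) (T • u) y :=
    hp0.mul_bdd ((continuous_gaussDensity_smul T).comp (.prodMk_right y)).aestronglyMeasurable
      (.of_forall fun u ↦ by
        rw [norm_of_nonneg (gaussDensity.pos hs _ _).le]; exact gaussDensity.le_const hs _ _)
  rw [fwdDensity_eq_integral_gaussDensity, ofReal_integral_eq_lintegral_ofReal hint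
    (.of_forall fun u ↦ mul_nonneg (hp0_nonneg u) (gaussDensity.pos hs _ _).le)]
  simp_rw [ENNReal.ofReal_mul (hp0_nonneg _)]

theorem fwdDensity_nonneg (hp0_nonneg : ∀ u, 0 ≤ p0 u) (hT : T ^ 2 < 1) (y : E) :
    0 ≤ fwdDensity d p0 T y :=
  integral_nonneg fun u ↦ mul_nonneg (hp0_nonneg u) (gaussDensity.pos (by linarith) _ _).le

theorem integrable_fwdDensity_and_integral_eq_one (hp0m : Measurable p0) (hp0 : Integrable p0)
    (hp0_nonneg : ∀ u, 0 ≤ p0 u) (hp0_one : ∫ u, p0 u = 1) (hT : T ^ 2 < 1) :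
    Integrable (fwdDensity d p0 T) ∧ ∫ y, fwdDensity d p0 T y = 1 := by
  have hs : 0 < 1 - T ^ 2 := by linarith
  have hkernel (u : E) :
      ∫⁻ y, ENNReal.ofReal (gaussDensity d (1 - T ^ 2) (T • u) y) = 1 := by
    rw [← ofReal_integral_eq_lintegral_ofReal (gaussDensity.integrable hs _)
      (.of_forall fun y ↦ (gaussDensity.pos hs _ _).le), gaussDensity.integral_eq_one hs,
      ENNReal.ofReal_one]
  have hlint : ∫⁻ y, ENNReal.ofReal (fwdDensity d p0 T y) = 1 := by
    simp_rw [ofReal_fwdDensity hp0 hp0_nonneg hT]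
    rw [lintegral_lintegral_swap ((hp0m.ennreal_ofReal.comp measurable_snd).mul
      (continuous_gaussDensity_smul T).measurable.ennreal_ofReal).aemeasurable]
    simp_rw [lintegral_const_mul' _ _ ENNReal.ofReal_ne_top, hkernel, mul_one]
    rw [← ofReal_integral_eq_lintegral_ofReal hp0 (.of_forall hp0_nonneg), hp0_one,
      ENNReal.ofReal_one]
  have hmeas := (stronglyMeasurable_fwdDensity (T := T) hp0m).aestronglyMeasurable (μ := volume)
  have hnonneg : 0 ≤ᵐ[volume] fwdDensity d p0 T := .of_forall (fwdDensity_nonneg hp0_nonneg hT)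
  refine ⟨(lintegral_ofReal_ne_top_iff_integrable hmeas hnonneg).mp (by simp [hlint]), ?_⟩
  rw [integral_eq_lintegral_of_nonneg_ae hnonneg hmeas, hlint, ENNReal.toReal_one]

theorem integrable_fwdDensity_sq_div_stdGauss_and_integral_le (hp0m : Measurable p0)
    (hp0 : Integrable p0) (hp0_nonneg : ∀ u, 0 ≤ p0 u)
    (hp0_one : ∫ u, p0 u = 1) (hsupp : ∀ u, p0 u ≠ 0 → ∀ i, |u i| ≤ 1) (hT : T ^ 2 ≤ 1 / 4) :
    Integrable (fun y ↦ fwdDensity d p0 T y ^ 2 / stdGauss d y) ∧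
      ∫ y, fwdDensity d p0 T y ^ 2 / stdGauss d y ≤ exp (2 * d * T ^ 2) := by
  have hT1 : T ^ 2 < 1 := by linarith
  have hlint : ∫⁻ y, ENNReal.ofReal (fwdDensity d p0 T y ^ 2 / stdGauss d y) ≤
      ENNReal.ofReal (exp (2 * d * T ^ 2)) := by
    simp_rw [ENNReal.ofReal_div_of_pos (stdGauss_pos _),
      ENNReal.ofReal_pow (fwdDensity_nonneg hp0_nonneg hT1 _), ofReal_fwdDensity hp0 hp0_nonneg hT1,
      div_eq_mul_inv]
    refine lintegral_sq_lintegral_mul_le hp0m.ennreal_ofReal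
      (continuous_gaussDensity_smul T).measurable.ennreal_ofReal
      continuous_stdGauss.measurable.ennreal_ofReal.inv
      (by rw [← ofReal_integral_eq_lintegral_ofReal hp0 (.of_forall hp0_nonneg), hp0_one,
        ENNReal.ofReal_one]) fun u v hu hv ↦ ?_
    have hsupp' {w : E} (hw : ENNReal.ofReal (p0 w) ≠ 0) : ∀ i, |w i| ≤ 1 :=
      hsupp w fun h ↦ hw (by simp [h])
    exact lintegral_gaussDensity_smul_mul_div_stdGauss_le hT
      (EuclideanSpace.inner_le_of_abs_le_one (hsupp' hu) (hsupp' hv))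
  have hmeas : AEStronglyMeasurable (fun y ↦ fwdDensity d p0 T y ^ 2 / stdGauss d y) :=
    (((stronglyMeasurable_fwdDensity hp0m).measurable.pow_const 2).div
      continuous_stdGauss.measurable).aestronglyMeasurable
  have hnonneg : 0 ≤ᵐ[volume] fun y ↦ fwdDensity d p0 T y ^ 2 / stdGauss d y :=
    .of_forall fun y ↦ div_nonneg (sq_nonneg _) (stdGauss_pos y).le
  refine ⟨(lintegral_ofReal_ne_top_iff_integrable hmeas hnonneg).mp
    (ne_top_of_le_ne_top ENNReal.ofReal_ne_top hlint), ?_⟩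
  rw [integral_eq_lintegral_of_nonneg_ae hnonneg hmeas]
  exact ENNReal.toReal_le_of_le_ofReal (exp_pos _).le hlint

end ForwardDensity

/-- **KL convergence to the Gaussian prior:**
`KL(q_T ‖ N(0, I_d)) = ∫ q_T log(q_T/φ_d) ≤ C T²` with `C` depending only on `d`. -/
theorem stmt_11 (d : ℕ) (hd : 1 ≤ d) :
    ∃ C > (0 : ℝ), ∀ p0 : EuclideanSpace ℝ (Fin d) → ℝ,
      Measurable p0 →
      (∀ u, 0 ≤ p0 u) →
      (∫ u : EuclideanSpace ℝ (Fin d), p0 u) = 1 →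
      (∀ u : EuclideanSpace ℝ (Fin d), (∃ i, 1 < |u i|) → p0 u = 0) →
      ∀ T ∈ Set.Ioc (0 : ℝ) (1 / 2),
        (∫ y : EuclideanSpace ℝ (Fin d),
            fwdDensity d p0 T y * Real.log (fwdDensity d p0 T y / stdGauss d y))
          ≤ C * T ^ 2 := by
  refine ⟨2 * d * exp (d / 2), by positivity, fun p0 hp0m hp0_nonneg hp0_one hsupp T hT ↦ ?_⟩
  have hp0 : Integrable p0 := .of_integral_ne_zero (by rw [hp0_one]; exact one_ne_zero)
  have hT4 : T ^ 2 ≤ 1 / 4 := by nlinarith [hT.1, hT.2]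
  have hT1 : T ^ 2 < 1 := by linarith
  obtain ⟨hq, hq_one⟩ := integrable_fwdDensity_and_integral_eq_one hp0m hp0 hp0_nonneg hp0_one hT1
  obtain ⟨hχ, hχ_le⟩ := integrable_fwdDensity_sq_div_stdGauss_and_integral_le hp0m hp0
    hp0_nonneg hp0_one (fun u hu i ↦ not_lt.mp fun h ↦ hu (hsupp u ⟨i, h⟩)) hT4
  calc _ ≤ (∫ y, fwdDensity d p0 T y ^ 2 / stdGauss d y) - ∫ y, fwdDensity d p0 T y :=
        integral_mul_log_div_le hq integrable_stdGauss hχ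
          (fwdDensity_nonneg hp0_nonneg hT1) stdGauss_pos
    _ ≤ exp (2 * d * T ^ 2) - 1 := by rw [hq_one]; linarith
    _ ≤ 2 * d * T ^ 2 * exp (2 * d * T ^ 2) := exp_sub_one_le_mul_exp _
    _ ≤ 2 * d * T ^ 2 * exp (d / 2) := by gcongr; nlinarith
    _ = 2 * d * exp (d / 2) * T ^ 2 := by ring
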